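/- Let K be an invertible adjointable operator on H and Λ_{CC'} = {W_j, Λ_j, v_j} a (C,C')-controlled g-fusion frame with bounds A, B and frame operator S = S_{(C,C')}. Set T = K S⁻¹ and assume T*T W_j ⊆ W_j for all j and that C, C' commute with T. Then {K S⁻¹ W_j, Λ_j P_{W_j} S⁻¹ K*, v_j}_{j∈J} is a (C,C')-controlled K-g-fusion frame for H with bounds A/B² and (B/A²)‖K‖², and its associated (C,C')-controlled g-fusion frame operator is K S⁻¹ K*. -/

import Mathlib

/-! With `T = K S⁻¹`, the adjoint `T* = S⁻¹ K*` commutes with `C` and `C'` (they are self-adjoint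
and commute with `T`), and `P_{W_j} T* Q_j = P_{W_j} T*` because the projection `Q_j` fixes `T W_j`.
So the `j`-th term of the new frame sum at `(f, g)` is the `j`-th term of the old one at
`(T* f, T* g)`, and the sum is `⟨S T* f, T* g⟩ = ⟨K S⁻¹ K* f, g⟩`. The frame bounds `a ≤ S ≤ b`
give `b⁻¹ ≤ S⁻¹ ≤ a⁻¹`, and Paschke's inequality `⟨K* f, K* f⟩ ≤ ‖K‖² ⟨f, f⟩` finishes the upper
bound. -/

open scoped RightActions

noncomputable section

/-- The `C⋆`-module class as it stood in the older Mathlib (right action of `Aᵐᵒᵖ`). -/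
class CStarModuleOld (A E : Type*) [NonUnitalSemiring A] [StarRing A] [Module ℂ A]
    [AddCommGroup E] [Module ℂ E] [PartialOrder A] [SMul Aᵐᵒᵖ E] [Norm A] [Norm E]
    extends Inner A E where
  inner_add_right {x y z : E} : inner x (y + z) = inner x y + inner x z
  inner_self_nonneg {x : E} : 0 ≤ inner x x
  inner_self {x : E} : inner x x = 0 ↔ x = 0
  inner_op_smul_right {a : A} {x y : E} : inner x (MulOpposite.op a • y) = inner x y * a
  inner_smul_right_complex {z : ℂ} {x y : E} : inner x (z • y) = z • inner x y
  star_inner (x y : E) : star (inner x y) = inner y x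
  norm_eq_sqrt_norm_inner_self (x : E) : ‖x‖ = √‖inner x x‖

variable {A : Type*} [CStarAlgebra A] [PartialOrder A] [StarOrderedRing A]
variable {H : Type*} [NormedAddCommGroup H] [NormedSpace ℂ H] [SMul Aᵐᵒᵖ H] [CStarModuleOld A H]
variable {J : Type*} {Hs : J → Type*} [∀ j, NormedAddCommGroup (Hs j)]
  [∀ j, NormedSpace ℂ (Hs j)] [∀ j, SMul Aᵐᵒᵖ (Hs j)] [∀ j, CStarModuleOld A (Hs j)]

theorem CStarAlgebra.le_smul_of_forall_conjugate_le {p q : A} (hp : 0 ≤ p) {c : ℝ}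
    (h : ∀ t : A, IsSelfAdjoint t → t * p * t ≤ 1 → t * q * t ≤ algebraMap ℝ A c) :
    q ≤ c • p := by
  have hε : ∀ ε : ℝ, 0 < ε → q ≤ c • (p + algebraMap ℝ A ε) := by
    intro ε hε
    have hu : IsStrictlyPositive (p + algebraMap ℝ A ε) :=
      IsStrictlyPositive.nonneg_add hp (isStrictlyPositive_algebraMap hε)
    -- `t = (p + ε)^(-1/2)` normalises `p`; conjugating back by `s = t⁻¹` gives `q ≤ c (p + ε)`
    set s := CFC.sqrt (p + algebraMap ℝ A ε)
    have hs : IsStrictlyPositive s := hu.sqrt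
    have hss : s * s = p + algebraMap ℝ A ε := CFC.sqrt_mul_sqrt_self _ hu.nonneg
    set t := Ring.inverse s
    have hst : s * t = 1 := Ring.mul_inverse_cancel s hs.isUnit
    have hts : t * s = 1 := Ring.inverse_mul_cancel s hs.isUnit
    have htp : t * p * t ≤ 1 := calc
      t * p * t ≤ t * (p + algebraMap ℝ A ε) * t :=
        hs.ringInverse.isSelfAdjoint.conjugate_le_conjugate
          (le_add_of_nonneg_right (algebraMap_nonneg (β := A) hε.le))
      _ = 1 := by rw [← hss, ← mul_assoc, hts, one_mul, hst]
    calc q = s * (t * q * t) * s := by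
          rw [← mul_assoc, ← mul_assoc, hst, one_mul, mul_assoc, hts, mul_one]
      _ ≤ s * algebraMap ℝ A c * s :=
        hs.isSelfAdjoint.conjugate_le_conjugate (h t hs.ringInverse.isSelfAdjoint htp)
      _ = c • (p + algebraMap ℝ A ε) := by
        rw [← Algebra.commutes, mul_assoc, hss, Algebra.smul_def]
  have hlim : Filter.Tendsto (fun ε : ℝ => c • (p + algebraMap ℝ A ε))
      (nhdsWithin 0 (Set.Ioi 0)) (nhds (c • p)) := by
    have hcont : Continuous fun ε : ℝ => c • (p + algebraMap ℝ A ε) := by fun_prop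
    simpa using (hcont.tendsto 0).mono_left nhdsWithin_le_nhds
  exact ge_of_tendsto hlim (eventually_nhdsWithin_of_forall hε)

namespace CStarModuleOld

section Inner

variable {E : Type*} [NormedAddCommGroup E] [NormedSpace ℂ E] [SMul Aᵐᵒᵖ E] [CStarModuleOld A E]

section Algebraic

omit [StarOrderedRing A]

theorem inner_zero_right {x : E} : inner A x 0 = 0 := by
  simpa using inner_add_right (A := A) (x := x) (y := 0) (z := 0)

theorem inner_zero_left {x : E} : inner A 0 x = 0 := by
  rw [← star_inner (A := A) x 0, inner_zero_right, star_zero]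

theorem inner_sub_right {x y z : E} : inner A x (y - z) = inner A x y - inner A x z := by
  rw [eq_sub_iff_add_eq, ← inner_add_right, sub_add_cancel]

theorem inner_sub_left {x y z : E} : inner A (x - y) z = inner A x z - inner A y z := by
  rw [← star_inner (A := A) z, inner_sub_right, star_sub, star_inner, star_inner]

theorem inner_op_smul_left {a : A} {x y : E} : inner A (x <• a) y = star a * inner A x y := by
  rw [← star_inner (A := A) y, inner_op_smul_right, star_mul, star_inner]

theorem inner_op_smul_op_smul {a b : A} {x y : E} :
    inner A (x <• a) (y <• b) = star a * inner A x y * b := by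
  rw [inner_op_smul_left, inner_op_smul_right, mul_assoc]

theorem inner_smul_right_real {r : ℝ} {x y : E} : inner A x (r • y) = r • inner A x y := by
  rw [← Complex.coe_smul, inner_smul_right_complex, Complex.coe_smul]

theorem inner_smul_left_real {r : ℝ} {x y : E} : inner A (r • x) y = r • inner A x y := by
  rw [← star_inner (A := A) y, inner_smul_right_real, star_smul, star_trivial, star_inner]

theorem norm_inner_self (x : E) : ‖inner A x x‖ = ‖x‖ ^ 2 := by
  rw [norm_eq_sqrt_norm_inner_self (A := A) x, Real.sq_sqrt (norm_nonneg _)]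

variable (A) in
theorem ext_inner_right {x y : E} (h : ∀ z : E, inner A x z = inner A y z) : x = y := by
  rw [← sub_eq_zero, ← inner_self (A := A), inner_sub_left, h, sub_self]

end Algebraic

theorem inner_mul_inner_swap_le (x y : E) :
    inner A y x * inner A x y ≤ ‖x‖ ^ 2 • inner A y y := by
  rcases eq_or_ne x 0 with rfl | hx
  · simp [inner_zero_left, inner_zero_right]
  -- expand `0 ≤ ⟪x a - ‖x‖² y, x a - ‖x‖² y⟫` at `a = ⟪x, y⟫`
  have hexp : ∀ a : A, (0 : A) ≤ ‖x‖ ^ 2 • (star a * a) - ‖x‖ ^ 2 • (inner A y x * a)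
      - ‖x‖ ^ 2 • (star a * inner A x y) + ‖x‖ ^ 2 • (‖x‖ ^ 2 • inner A y y) := fun a => calc
    (0 : A) ≤ inner A (x <• a - ‖x‖ ^ 2 • y) (x <• a - ‖x‖ ^ 2 • y) := inner_self_nonneg
    _ = star a * inner A x x * a - ‖x‖ ^ 2 • (inner A y x * a)
          - ‖x‖ ^ 2 • (star a * inner A x y) + ‖x‖ ^ 2 • (‖x‖ ^ 2 • inner A y y) := by
      simp only [inner_sub_right, inner_op_smul_right, inner_sub_left, inner_op_smul_left,
        inner_smul_left_real, sub_mul, smul_mul_assoc, inner_smul_right_real,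
        smul_sub, mul_assoc]
      abel
    _ ≤ _ := by
      gcongr
      calc star a * inner A x x * a ≤ ‖inner A x x‖ • (star a * a) :=
          CStarAlgebra.star_left_conjugate_le_norm_smul (.of_nonneg inner_self_nonneg)
        _ = ‖x‖ ^ 2 • (star a * a) := by rw [norm_inner_self]
  have h := hexp (inner A x y)
  simp only [star_inner, sub_self, zero_sub, le_neg_add_iff_add_le, add_zero] at h
  rwa [smul_le_smul_iff_of_pos_left (by positivity)] at h

variable (E) in
theorem norm_inner_le (x y : E) : ‖inner A x y‖ ≤ ‖x‖ * ‖y‖ := by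
  refine (pow_le_pow_iff_left₀ (norm_nonneg _) (by positivity) two_ne_zero).mp ?_
  calc ‖inner A x y‖ ^ 2 = ‖inner A y x * inner A x y‖ := by
        rw [← star_inner (A := A) x y, CStarRing.norm_star_mul_self, pow_two]
    _ ≤ ‖‖x‖ ^ 2 • inner A y y‖ := by
        refine CStarAlgebra.norm_le_norm_of_nonneg_of_le ?_ (inner_mul_inner_swap_le x y)
        rw [← star_inner (A := A) x y]
        exact star_mul_self_nonneg _
    _ = (‖x‖ * ‖y‖) ^ 2 := by
        rw [norm_smul, norm_inner_self, Real.norm_of_nonneg (by positivity), mul_pow]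

theorem inner_map_self_le {F : Type*} [NormedAddCommGroup F] [NormedSpace ℂ F] [SMul Aᵐᵒᵖ F]
    [CStarModuleOld A F] (T : E → F) {c : ℝ} (hT : ∀ (x : E) (a : A), T (x <• a) = T x <• a)
    (hc : ∀ x, ‖T x‖ ≤ c * ‖x‖) (x : E) :
    inner A (T x) (T x) ≤ c ^ 2 • inner A x x := by
  refine CStarAlgebra.le_smul_of_forall_conjugate_le inner_self_nonneg fun t ht hle => ?_
  have hxt : ‖x <• t‖ ^ 2 ≤ 1 := by
    rw [← norm_inner_self (A := A), CStarAlgebra.norm_le_one_iff_of_nonneg _ inner_self_nonneg,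
      inner_op_smul_op_smul, ht.star_eq]
    exact hle
  have hTt : inner A (T (x <• t)) (T (x <• t)) = t * inner A (T x) (T x) * t := by
    rw [hT, inner_op_smul_op_smul, ht.star_eq]
  rw [← hTt, ← CStarAlgebra.norm_le_iff_le_algebraMap _ (sq_nonneg c) inner_self_nonneg,
    norm_inner_self]
  calc ‖T (x <• t)‖ ^ 2 ≤ (c * ‖x <• t‖) ^ 2 := pow_le_pow_left₀ (norm_nonneg _) (hc _) 2
    _ = c ^ 2 * ‖x <• t‖ ^ 2 := mul_pow _ _ _
    _ ≤ c ^ 2 := mul_le_of_le_one_right (sq_nonneg c) hxt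

end Inner

section Adjoint

variable {E F G : Type*} [NormedAddCommGroup E] [NormedSpace ℂ E] [SMul Aᵐᵒᵖ E]
  [CStarModuleOld A E] [NormedAddCommGroup F] [NormedSpace ℂ F] [SMul Aᵐᵒᵖ F]
  [CStarModuleOld A F] [NormedAddCommGroup G] [NormedSpace ℂ G] [SMul Aᵐᵒᵖ G]
  [CStarModuleOld A G]

variable (A) in
def IsAdjointPair (T : E →L[ℂ] F) (T' : F →L[ℂ] E) : Prop :=
  ∀ x y, inner A (T x) y = inner A x (T' y)

namespace IsAdjointPair

section Algebraic

omit [StarOrderedRing A]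

variable {T : E →L[ℂ] F} {T' : F →L[ℂ] E}

theorem symm (h : IsAdjointPair A T T') : IsAdjointPair A T' T := fun y x => by
  rw [← star_inner (A := A) x, ← h, star_inner]

theorem comp {U : F →L[ℂ] G} {U' : G →L[ℂ] F} (h : IsAdjointPair A T T')
    (hU : IsAdjointPair A U U') : IsAdjointPair A (U.comp T) (T'.comp U') :=
  fun x z => (hU (T x) z).trans (h x (U' z))

theorem map_op_smul (h : IsAdjointPair A T T') (y : F) (a : A) : T' (y <• a) = T' y <• a :=
  ext_inner_right A fun z => by rw [h.symm, inner_op_smul_left, inner_op_smul_left, h.symm]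

theorem apply_comm_of_commute {C T T' : E →L[ℂ] E} (h : IsAdjointPair A T T')
    (hC : IsAdjointPair A C C) (hCT : Commute C T) (y : E) : T' (C y) = C (T' y) :=
  ext_inner_right A fun z => calc
    inner A (T' (C y)) z = inner A y (C (T z)) := by rw [h.symm, hC]
    _ = inner A y (T (C z)) := congrArg _ (DFunLike.congr_fun hCT.eq z)
    _ = inner A (C (T' y)) z := by rw [hC, h.symm]

theorem of_comp_eq_id {S Sinv : E →L[ℂ] E} (hS : IsAdjointPair A S S)
    (h : S.comp Sinv = .id ℂ E) : IsAdjointPair A Sinv Sinv := fun x y => by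
  have hSS : ∀ w, S (Sinv w) = w := fun w => DFunLike.congr_fun h w
  calc inner A (Sinv x) y = inner A (Sinv x) (S (Sinv y)) := by rw [hSS]
    _ = inner A (S (Sinv x)) (Sinv y) := (hS _ _).symm
    _ = inner A x (Sinv y) := by rw [hSS]

theorem proj_apply_proj_eq {P : E →L[ℂ] E} {Q : F →L[ℂ] F} (h : IsAdjointPair A T T')
    (hP : IsAdjointPair A P P) (hQ : IsAdjointPair A Q Q) (hQQ : IsIdempotentElem Q)
    (hPQ : T '' Set.range P ⊆ Set.range Q) (w : F) : P (T' (Q w)) = P (T' w) :=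
  ext_inner_right A fun z => by
    obtain ⟨u, hu⟩ := hPQ ⟨P z, ⟨z, rfl⟩, rfl⟩
    have hQT : Q (T (P z)) = T (P z) := by
      rw [← hu]
      exact DFunLike.congr_fun hQQ u
    rw [hP, hP, h.symm, h.symm, hQ, hQT]

end Algebraic

variable {T : E →L[ℂ] F} {T' : F →L[ℂ] E}

theorem norm_apply_le (h : IsAdjointPair A T T') (y : F) : ‖T' y‖ ≤ ‖T‖ * ‖y‖ := by
  rcases (norm_nonneg (T' y)).eq_or_lt with h0 | hpos
  · rw [← h0]
    positivity
  refine le_of_mul_le_mul_right ?_ hpos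
  calc ‖T' y‖ * ‖T' y‖ = ‖inner A y (T (T' y))‖ := by rw [← h.symm, norm_inner_self, sq]
    _ ≤ ‖y‖ * ‖T (T' y)‖ := norm_inner_le F _ _
    _ ≤ ‖y‖ * (‖T‖ * ‖T' y‖) := by gcongr; exact T.le_opNorm _
    _ = ‖T‖ * ‖y‖ * ‖T' y‖ := by ring

theorem inner_self_apply_le (h : IsAdjointPair A T T') (y : F) :
    inner A (T' y) (T' y) ≤ ‖T‖ ^ 2 • inner A y y :=
  inner_map_self_le T' h.map_op_smul h.norm_apply_le y

end IsAdjointPair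

omit [StarOrderedRing A] in
theorem inner_apply_comm_of_commute {M : E →L[ℂ] F} {M' : F →L[ℂ] E}
    (hM : IsAdjointPair A M M') {C C' : E →L[ℂ] E} (hC : IsAdjointPair A C C)
    (hC' : IsAdjointPair A C' C') (hCC' : Commute C C') (hCM : Commute C (M'.comp M))
    (hC'M : Commute C' (M'.comp M)) (x y : E) :
    inner A (M (C' x)) (M (C y)) = inner A (M (C x)) (M (C' y)) := by
  have hCM' : ∀ z, C (M' (M z)) = M' (M (C z)) := DFunLike.congr_fun hCM.eq
  have hC'M' : ∀ z, C' (M' (M z)) = M' (M (C' z)) := DFunLike.congr_fun hC'M.eq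
  have hCC'y : C' (C y) = C (C' y) := (DFunLike.congr_fun hCC'.eq y).symm
  calc inner A (M (C' x)) (M (C y)) = inner A x (C' (M' (M (C y)))) := by rw [hM, hC']
    _ = inner A x (M' (M (C (C' y)))) := by rw [hC'M', hCC'y]
    _ = inner A (M (C x)) (M (C' y)) := by rw [← hCM', hM, hC]

end Adjoint

section SelfAdjoint

variable {E : Type*} [NormedAddCommGroup E] [NormedSpace ℂ E] [SMul Aᵐᵒᵖ E] [CStarModuleOld A E]
  {S : E →L[ℂ] E}

namespace IsAdjointPair

omit [StarOrderedRing A] in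
theorem self_of_inner_eq_tsum {ι : Type*} (F : ι → E → E → A)
    (hF : ∀ i x y, star (F i y x) = F i x y) (hS : ∀ x y, inner A (S x) y = ∑' i, F i x y) :
    IsAdjointPair A S S := fun x y => by
  rw [← star_inner (A := A) (S y) x, hS, hS, tsum_star]
  exact tsum_congr fun i => (hF i x y).symm

omit [StarOrderedRing A] in
theorem self_of_controlled_tsum {M : ∀ j, E →L[ℂ] Hs j} {M' : ∀ j, Hs j →L[ℂ] E}
    (hM : ∀ j, IsAdjointPair A (M j) (M' j)) {C C' : E →L[ℂ] E} (hC : IsAdjointPair A C C)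
    (hC' : IsAdjointPair A C' C') (hCC' : Commute C C') (hCM : ∀ j, Commute C ((M' j).comp (M j)))
    (hC'M : ∀ j, Commute C' ((M' j).comp (M j))) {v : J → A} (hv : ∀ j, IsSelfAdjoint (v j))
    (hv_central : ∀ j a, Commute (v j) a)
    (hS : ∀ x y, inner A (S x) y = ∑' j, v j * v j * inner A (M j (C x)) (M j (C' y))) :
    IsAdjointPair A S S := by
  refine self_of_inner_eq_tsum _ (fun j x y => ?_) hS
  rw [star_mul, star_mul, (hv j).star_eq, star_inner,
    ← ((hv_central j _).mul_left (hv_central j _)).eq,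
    inner_apply_comm_of_commute (hM j) hC hC' hCC' (hCM j) (hC'M j)]

theorem inner_apply_apply_le_smul (hS : IsAdjointPair A S S) {b : ℝ} (hb : 0 < b)
    (hpos : ∀ w, 0 ≤ inner A (S w) w) (hle : ∀ w, inner A (S w) w ≤ b • inner A w w) (h : E) :
    inner A (S h) (S h) ≤ b • inner A (S h) h := by
  have key : 0 ≤ b • (b • inner A (S h) h - inner A (S h) (S h)) := calc
    (0 : A) ≤ inner A (S (b • h - S h)) (b • h - S h) := hpos _
    _ = (b * b) • inner A (S h) h - (2 * b) • inner A (S h) (S h)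
          + inner A (S (S h)) (S h) := by
      simp only [map_sub, ContinuousLinearMap.map_smul_of_tower, inner_sub_left, inner_sub_right,
        inner_smul_left_real, inner_smul_right_real]
      rw [hS (S h) h]
      module
    _ ≤ (b * b) • inner A (S h) h - (2 * b) • inner A (S h) (S h) + b • inner A (S h) (S h) := by
      gcongr
      exact hle (S h)
    _ = b • (b • inner A (S h) h - inner A (S h) (S h)) := by module
  exact sub_nonneg.mp (nonneg_of_smul_nonneg_of_pos_left key hb)

theorem smul_inner_apply_le (hS : IsAdjointPair A S S) {a : ℝ} (ha : 0 ≤ a)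
    (hge : ∀ w, a • inner A w w ≤ inner A (S w) w) (h : E) :
    a • inner A (S h) h ≤ inner A (S h) (S h) := by
  rw [← sub_nonneg]
  calc (0 : A) ≤ inner A (S h - a • h) (S h - a • h) + a • (inner A (S h) h - a • inner A h h) :=
        add_nonneg inner_self_nonneg (smul_nonneg ha (sub_nonneg.mpr (hge h)))
    _ = inner A (S h) (S h) - a • inner A (S h) h := by
      simp only [inner_sub_left, inner_sub_right, inner_smul_left_real, inner_smul_right_real,
        smul_sub, smul_smul]
      rw [← hS h h]
      module

theorem inner_inverse_apply_bounds (hS : IsAdjointPair A S S) {Sinv : E →L[ℂ] E}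
    (hSinv : S.comp Sinv = .id ℂ E) {a b : ℝ} (ha : 0 < a) (hb : 0 < b)
    (hframe : ∀ w, a • inner A w w ≤ inner A (S w) w ∧ inner A (S w) w ≤ b • inner A w w)
    (x : E) :
    b⁻¹ • inner A x x ≤ inner A x (Sinv x) ∧ inner A x (Sinv x) ≤ a⁻¹ • inner A x x := by
  have hx : S (Sinv x) = x := DFunLike.congr_fun hSinv x
  have hpos : ∀ w, 0 ≤ inner A (S w) w := fun w =>
    (smul_nonneg ha.le inner_self_nonneg).trans (hframe w).1
  constructor
  · rw [inv_smul_le_iff_of_pos hb]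
    simpa only [hx] using hS.inner_apply_apply_le_smul hb hpos (fun w => (hframe w).2) (Sinv x)
  · rw [le_inv_smul_iff_of_pos ha]
    simpa only [hx] using hS.smul_inner_apply_le ha.le (fun w => (hframe w).1) (Sinv x)

end IsAdjointPair

end SelfAdjoint

end CStarModuleOld

theorem controlled_K_g_fusion_frame_dual_type_general
    (C C' : H →L[ℂ] H) (P : J → H →L[ℂ] H) (Λ : ∀ j, H →L[ℂ] Hs j)
    (Λad : ∀ j, Hs j →L[ℂ] H) (v : J → A)
    (hΛad : ∀ (j) (x : H) (u : Hs j), (inner A (Λ j x) u : A) = inner A x (Λad j u))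
    (hP_sa : ∀ (j) (f g : H), (inner A (P j f) g : A) = inner A f (P j g))
    (hC_sa : ∀ f g : H, (inner A (C f) g : A) = inner A f (C g))
    (hC'_sa : ∀ f g : H, (inner A (C' f) g : A) = inner A f (C' g))
    (hCC' : C.comp C' = C'.comp C)
    (hCT : ∀ j, C.comp ((P j).comp ((Λad j).comp ((Λ j).comp (P j))))
      = ((P j).comp ((Λad j).comp ((Λ j).comp (P j)))).comp C)
    (hC'T : ∀ j, C'.comp ((P j).comp ((Λad j).comp ((Λ j).comp (P j))))
      = ((P j).comp ((Λad j).comp ((Λ j).comp (P j)))).comp C')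
    (hv_pos : ∀ j, 0 ≤ v j)
    (hv_central : ∀ (j) (a : A), Commute (v j) a)
    (a b : ℝ) (ha : 0 < a) (hab : a ≤ b)
    (hsum : ∀ f : H, Summable fun j =>
      v j * v j * (inner A (Λ j (P j (C f))) (Λ j (P j (C' f))) : A))
    (hframe : ∀ f : H,
      a • (inner A f f : A) ≤
        (∑' j, v j * v j * (inner A (Λ j (P j (C f))) (Λ j (P j (C' f))) : A)) ∧
      (∑' j, v j * v j * (inner A (Λ j (P j (C f))) (Λ j (P j (C' f))) : A)) ≤
        b • (inner A f f : A))
    (K Kad : H →L[ℂ] H)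
    (hKad : ∀ x y : H, (inner A (K x) y : A) = inner A x (Kad y))
    (S : H →L[ℂ] H)
    (hS : ∀ f g : H, (inner A (S f) g : A) =
      ∑' j, v j * v j * (inner A (Λ j (P j (C f))) (Λ j (P j (C' g))) : A))
    (Sinv : H →L[ℂ] H)
    (hSinv₁ : S.comp Sinv = ContinuousLinearMap.id ℂ H)
    (hTC : C.comp (K.comp Sinv) = (K.comp Sinv).comp C)
    (hTC' : C'.comp (K.comp Sinv) = (K.comp Sinv).comp C')
    (Q : J → H →L[ℂ] H)
    (hQ_idem : ∀ j, (Q j).comp (Q j) = Q j)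
    (hQ_sa : ∀ (j) (f g : H), (inner A (Q j f) g : A) = inner A f (Q j g))
    (hQ_range : ∀ j, Set.range (Q j) = (K.comp Sinv) '' Set.range (P j)) :
    (∀ f : H,
      Summable (fun j => v j * v j *
        (inner A (Λ j (P j (Sinv (Kad (Q j (C f))))))
          (Λ j (P j (Sinv (Kad (Q j (C' f)))))) : A)) ∧
      (a / b ^ 2) • (inner A (Kad f) (Kad f) : A) ≤
        (∑' j, v j * v j *
          (inner A (Λ j (P j (Sinv (Kad (Q j (C f))))))
            (Λ j (P j (Sinv (Kad (Q j (C' f)))))) : A)) ∧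
      (∑' j, v j * v j *
        (inner A (Λ j (P j (Sinv (Kad (Q j (C f))))))
          (Λ j (P j (Sinv (Kad (Q j (C' f)))))) : A)) ≤
        (b / a ^ 2 * ‖K‖ ^ 2) • (inner A f f : A)) ∧
    (∀ f g : H,
      (∑' j, v j * v j *
        (inner A (Λ j (P j (Sinv (Kad (Q j (C f))))))
          (Λ j (P j (Sinv (Kad (Q j (C' g)))))) : A)) =
        inner A (K (Sinv (Kad f))) g) := by
  have hS_sa : CStarModuleOld.IsAdjointPair A S S :=
    .self_of_controlled_tsum (fun j => .comp (hP_sa j) (hΛad j)) hC_sa hC'_sa hCC' hCT hC'T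
      (fun j => .of_nonneg (hv_pos j)) hv_central hS
  have hSinv_sa := hS_sa.of_comp_eq_id hSinv₁
  have hT : CStarModuleOld.IsAdjointPair A (K.comp Sinv) (Sinv.comp Kad) := hSinv_sa.comp hKad
  have hproj : ∀ j w, P j (Sinv (Kad (Q j w))) = P j (Sinv (Kad w)) := fun j =>
    hT.proj_apply_proj_eq (hP_sa j) (hQ_sa j) (hQ_idem j) (hQ_range j).ge
  have hC : ∀ w, Sinv (Kad (C w)) = C (Sinv (Kad w)) := hT.apply_comm_of_commute hC_sa hTC
  have hC' : ∀ w, Sinv (Kad (C' w)) = C' (Sinv (Kad w)) := hT.apply_comm_of_commute hC'_sa hTC'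
  have hterm : ∀ f g j, v j * v j * inner A (Λ j (P j (Sinv (Kad (Q j (C f))))))
      (Λ j (P j (Sinv (Kad (Q j (C' g)))))) = v j * v j * inner A
      (Λ j (P j (C (Sinv (Kad f))))) (Λ j (P j (C' (Sinv (Kad g))))) := fun f g j => by
    rw [hproj, hproj, hC, hC']
  have hSS : ∀ w, S (Sinv w) = w := DFunLike.congr_fun hSinv₁
  have htsum : ∀ f g, ∑' j, v j * v j * inner A (Λ j (P j (Sinv (Kad (Q j (C f))))))
      (Λ j (P j (Sinv (Kad (Q j (C' g)))))) = inner A (Kad f) (Sinv (Kad g)) := fun f g => by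
    rw [tsum_congr (hterm f g), ← hS, hSS]
  have hframe' : ∀ w, a • inner A w w ≤ inner A (S w) w ∧ inner A (S w) w ≤ b • inner A w w :=
    fun w => by simpa only [hS] using hframe w
  refine ⟨fun f => ?_, fun f g => by rw [htsum, hKad, hSinv_sa]⟩
  have hb : 0 < b := ha.trans_le hab
  obtain ⟨hlower, hupper⟩ := hS_sa.inner_inverse_apply_bounds hSinv₁ ha hb hframe' (Kad f)
  refine ⟨(hsum _).congr fun j => (hterm f f j).symm, ?_, ?_⟩
  · rw [htsum]
    refine le_trans (smul_le_smul_of_nonneg_right ?_ CStarModuleOld.inner_self_nonneg) hlower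
    field_simp
    exact hab
  · rw [htsum]
    calc inner A (Kad f) (Sinv (Kad f)) ≤ a⁻¹ • inner A (Kad f) (Kad f) := hupper
      _ ≤ a⁻¹ • ‖K‖ ^ 2 • inner A f f := by
        gcongr
        exact CStarModuleOld.IsAdjointPair.inner_self_apply_le hKad f
      _ ≤ (b / a ^ 2 * ‖K‖ ^ 2) • inner A f f := by
        rw [smul_smul]
        refine smul_le_smul_of_nonneg_right ?_ CStarModuleOld.inner_self_nonneg
        gcongr
        field_simp
        exact hab

/-- for invertible `K` and a `(C,C')`-controlled g-fusion frame with
frame operator `S`, setting `T = KS⁻¹` with `T*TW_j ⊆ W_j` and `C, C'` commuting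
with `T`, the family `{KS⁻¹W_j, Λ_jP_{W_j}S⁻¹K*, v_j}` is a `(C,C')`-controlled
`K`-g-fusion frame with bounds `A/B²`, `(B/A²)‖K‖²`, and its frame operator is
`KS⁻¹K*`. -/
theorem controlled_K_g_fusion_frame_dual_type
    (C C' : H →L[ℂ] H) (P : J → H →L[ℂ] H) (Λ : ∀ j, H →L[ℂ] Hs j)
    (Λad : ∀ j, Hs j →L[ℂ] H) (v : J → A)
    (hΛad : ∀ (j) (x : H) (u : Hs j), (inner A (Λ j x) u : A) = inner A x (Λad j u))
    (hP_idem : ∀ j, (P j).comp (P j) = P j)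
    (hP_sa : ∀ (j) (f g : H), (inner A (P j f) g : A) = inner A f (P j g))
    (hC_sa : ∀ f g : H, (inner A (C f) g : A) = inner A f (C g))
    (hC'_sa : ∀ f g : H, (inner A (C' f) g : A) = inner A f (C' g))
    (hC_pos : ∀ f : H, 0 ≤ (inner A (C f) f : A))
    (hC'_pos : ∀ f : H, 0 ≤ (inner A (C' f) f : A))
    (hC_inv : Function.Bijective C) (hC'_inv : Function.Bijective C')
    (hCC' : C.comp C' = C'.comp C)
    (hCT : ∀ j, C.comp ((P j).comp ((Λad j).comp ((Λ j).comp (P j))))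
      = ((P j).comp ((Λad j).comp ((Λ j).comp (P j)))).comp C)
    (hC'T : ∀ j, C'.comp ((P j).comp ((Λad j).comp ((Λ j).comp (P j))))
      = ((P j).comp ((Λad j).comp ((Λ j).comp (P j)))).comp C')
    (hv_pos : ∀ j, 0 ≤ v j) (hv_inv : ∀ j, IsUnit (v j))
    (hv_central : ∀ (j) (a : A), Commute (v j) a)
    (a b : ℝ) (ha : 0 < a) (hab : a ≤ b)
    (hsum : ∀ f : H, Summable fun j =>
      v j * v j * (inner A (Λ j (P j (C f))) (Λ j (P j (C' f))) : A))
    (hframe : ∀ f : H,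
      a • (inner A f f : A) ≤
        (∑' j, v j * v j * (inner A (Λ j (P j (C f))) (Λ j (P j (C' f))) : A)) ∧
      (∑' j, v j * v j * (inner A (Λ j (P j (C f))) (Λ j (P j (C' f))) : A)) ≤
        b • (inner A f f : A))
    (K Kad : H →L[ℂ] H)
    (hKad : ∀ x y : H, (inner A (K x) y : A) = inner A x (Kad y))
    (hK_inv : Function.Bijective K)
    (S : H →L[ℂ] H)
    (hS : ∀ f g : H, (inner A (S f) g : A) =
      ∑' j, v j * v j * (inner A (Λ j (P j (C f))) (Λ j (P j (C' g))) : A))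
    (Sinv : H →L[ℂ] H)
    (hSinv₁ : S.comp Sinv = ContinuousLinearMap.id ℂ H)
    (hSinv₂ : Sinv.comp S = ContinuousLinearMap.id ℂ H)
    (hTW : ∀ (j) (x : H), x ∈ Set.range (P j) →
      (Sinv.comp Kad) ((K.comp Sinv) x) ∈ Set.range (P j))
    (hTC : C.comp (K.comp Sinv) = (K.comp Sinv).comp C)
    (hTC' : C'.comp (K.comp Sinv) = (K.comp Sinv).comp C')
    (Q : J → H →L[ℂ] H)
    (hQ_idem : ∀ j, (Q j).comp (Q j) = Q j)
    (hQ_sa : ∀ (j) (f g : H), (inner A (Q j f) g : A) = inner A f (Q j g))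
    (hQ_range : ∀ j, Set.range (Q j) = (K.comp Sinv) '' Set.range (P j)) :
    (∀ f : H,
      Summable (fun j => v j * v j *
        (inner A (Λ j (P j (Sinv (Kad (Q j (C f))))))
          (Λ j (P j (Sinv (Kad (Q j (C' f)))))) : A)) ∧
      (a / b ^ 2) • (inner A (Kad f) (Kad f) : A) ≤
        (∑' j, v j * v j *
          (inner A (Λ j (P j (Sinv (Kad (Q j (C f))))))
            (Λ j (P j (Sinv (Kad (Q j (C' f)))))) : A)) ∧
      (∑' j, v j * v j *
        (inner A (Λ j (P j (Sinv (Kad (Q j (C f))))))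
          (Λ j (P j (Sinv (Kad (Q j (C' f)))))) : A)) ≤
        (b / a ^ 2 * ‖K‖ ^ 2) • (inner A f f : A)) ∧
    (∀ f g : H,
      (∑' j, v j * v j *
        (inner A (Λ j (P j (Sinv (Kad (Q j (C f))))))
          (Λ j (P j (Sinv (Kad (Q j (C' g)))))) : A)) =
        inner A (K (Sinv (Kad f))) g) :=
  controlled_K_g_fusion_frame_dual_type_general C C' P Λ Λad v hΛad hP_sa hC_sa hC'_sa hCC' hCT hC'T
    hv_pos hv_central a b ha hab hsum hframe K Kad hKad S hS Sinv hSinv₁ hTC hTC' Q hQ_idem hQ_sa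
    hQ_range
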